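/- Let n ≥ 2, let x_1, …, x_n be distinct real numbers, and let K : ℝ → [0,1] be nondecreasing with K(−z) = 1 − K(z) for all z. For b ≥ 0 set V_i = (n−1)^{−1} Σ_{j≠i} K_b(x_i − x_j), let F_n be the empirical distribution function of x_1, …, x_n and G_n the empirical distribution function of V_1, …, V_n. Then n^{−1} Σ_{i=1}^n (V_i − F_n(x_i))² = ∫_0^1 (G_n(t) − t)² dt + 1/(6n²). -/
import Mathlib


/-- `K_b`: scaled kernel distribution function, with the convention
`K_0(z) = 1{z > 0} + (1/2)·1{z = 0}`, consistent with `K(0) = 1/2`. -/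
noncomputable def scaledKernelDF (K : ℝ → ℝ) (b : ℝ) (z : ℝ) : ℝ :=
  if 0 < b then K (z / b) else if 0 < z then 1 else if z = 0 then 1 / 2 else 0

open MeasureTheory Finset

section Aux

lemma Kb_mem {K : ℝ → ℝ} (hK01 : ∀ z, K z ∈ Set.Icc (0:ℝ) 1) (b z : ℝ) :
    scaledKernelDF K b z ∈ Set.Icc (0:ℝ) 1 := by
  unfold scaledKernelDF
  split_ifs <;> first | exact hK01 _ | norm_num

lemma Kb_mono {K : ℝ → ℝ} (hKmono : Monotone K) {b : ℝ} (hb : 0 ≤ b) :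
    Monotone (scaledKernelDF K b) := by
  intro z1 z2 h
  unfold scaledKernelDF
  by_cases hbp : 0 < b
  · simp only [if_pos hbp]
    exact hKmono ((div_le_div_iff_of_pos_right hbp).mpr h)
  · simp only [if_neg hbp]
    rcases lt_trichotomy z1 0 with h1 | h1 | h1
    · rw [if_neg (not_lt.mpr h1.le), if_neg h1.ne]
      split_ifs <;> norm_num
    · subst h1
      rw [if_neg (lt_irrefl 0), if_pos rfl]
      rcases eq_or_lt_of_le h with h2 | h2
      · rw [← h2]; norm_num
      · rw [if_pos h2]; norm_num
    · rw [if_pos h1, if_pos (lt_of_lt_of_le h1 h)]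

lemma Kb_sym {K : ℝ → ℝ} (hKsym : ∀ z, K (-z) = 1 - K z) (b z : ℝ) :
    scaledKernelDF K b z + scaledKernelDF K b (-z) = 1 := by
  unfold scaledKernelDF
  by_cases hbp : 0 < b
  · simp only [if_pos hbp]
    rw [show -z / b = -(z / b) by ring, hKsym]
    ring
  · simp only [if_neg hbp]
    rcases lt_trichotomy z 0 with h | h | h
    · rw [if_neg (by linarith), if_neg (by linarith), if_pos (by linarith)]; ring
    · subst h; norm_num
    · rw [if_pos h, if_neg (by linarith), if_neg (by linarith)]; ring

lemma ind_integrable (m a b : ℝ) :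
    IntervalIntegrable (fun t => if m ≤ t then (1:ℝ) else 0) volume a b := by
  apply Monotone.intervalIntegrable
  intro t1 t2 h
  dsimp only
  split_ifs <;> linarith

lemma ind_t_integrable (m : ℝ) {a b : ℝ} (ha : 0 ≤ a) (hb : 0 ≤ b) :
    IntervalIntegrable (fun t => t * (if m ≤ t then (1:ℝ) else 0)) volume a b := by
  apply MonotoneOn.intervalIntegrable
  intro t1 ht1 t2 ht2 h
  rw [Set.mem_uIcc] at ht1 ht2
  have h01 : 0 ≤ t1 := by rcases ht1 with h' | h' <;> linarith [h'.1, h'.2]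
  have h02 : 0 ≤ t2 := by rcases ht2 with h' | h' <;> linarith [h'.1, h'.2]
  dsimp only
  split_ifs <;> nlinarith

lemma ae_ne (m : ℝ) : ∀ᵐ t : ℝ, t ≠ m := by
  rw [MeasureTheory.ae_iff]
  have h : {a : ℝ | ¬ a ≠ m} = {m} := by ext t; simp
  rw [h]
  exact Real.volume_singleton

lemma ind_integral {m : ℝ} (hm0 : 0 ≤ m) (hm1 : m ≤ 1) :
    ∫ t in (0:ℝ)..1, (if m ≤ t then (1:ℝ) else 0) = 1 - m := by
  rw [← intervalIntegral.integral_add_adjacent_intervals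
    (ind_integrable m 0 m) (ind_integrable m m 1)]
  have e1 : ∫ t in (0:ℝ)..m, (if m ≤ t then (1:ℝ) else 0) = 0 := by
    rw [intervalIntegral.integral_congr_ae (g := fun _ => (0:ℝ))]
    · simp
    · filter_upwards [ae_ne m] with t ht hmem
      rw [Set.uIoc_of_le hm0, Set.mem_Ioc] at hmem
      rw [if_neg (fun hle => ht (le_antisymm hmem.2 hle))]
  have e2 : ∫ t in m..1, (if m ≤ t then (1:ℝ) else 0) = 1 - m := by
    rw [intervalIntegral.integral_congr (g := fun _ => (1:ℝ))]
    · simp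
    · intro t ht
      rw [Set.uIcc_of_le hm1, Set.mem_Icc] at ht
      simp [ht.1]
  rw [e1, e2, zero_add]

lemma ind_t_integral {m : ℝ} (hm0 : 0 ≤ m) (hm1 : m ≤ 1) :
    ∫ t in (0:ℝ)..1, t * (if m ≤ t then (1:ℝ) else 0) = (1 - m^2) / 2 := by
  rw [← intervalIntegral.integral_add_adjacent_intervals
    (ind_t_integrable m le_rfl hm0) (ind_t_integrable m hm0 zero_le_one)]
  have e1 : ∫ t in (0:ℝ)..m, t * (if m ≤ t then (1:ℝ) else 0) = 0 := by
    rw [intervalIntegral.integral_congr_ae (g := fun _ => (0:ℝ))]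
    · simp
    · filter_upwards [ae_ne m] with t ht hmem
      rw [Set.uIoc_of_le hm0, Set.mem_Ioc] at hmem
      rw [if_neg (fun hle => ht (le_antisymm hmem.2 hle))]
      ring
  have e2 : ∫ t in m..1, t * (if m ≤ t then (1:ℝ) else 0) = (1 - m^2) / 2 := by
    rw [intervalIntegral.integral_congr (g := fun t => t)]
    · rw [integral_id]; ring
    · intro t ht
      rw [Set.uIcc_of_le hm1, Set.mem_Icc] at ht
      simp [ht.1]
  rw [e1, e2, zero_add]

lemma sum_range_sq (n : ℕ) :
    ∑ k ∈ Finset.range n, ((k:ℝ) + 1)^2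
      = (n:ℝ) * ((n:ℝ) + 1) * (2*(n:ℝ) + 1) / 6 := by
  induction n with
  | zero => simp
  | succ m ih =>
    rw [Finset.sum_range_succ, ih]
    push_cast
    ring

/-- The key abstract lemma: the analytic/algebraic part of the identity. -/
lemma key (n : ℕ) (hn : 2 ≤ n) (v R : Fin n → ℝ)
    (hv0 : ∀ i, 0 ≤ v i) (hv1 : ∀ i, v i ≤ 1)
    (hsum : ∑ i, v i = (n:ℝ) / 2)
    (hmax : ∑ i : Fin n, ∑ j : Fin n, max (v i) (v j)
        = 2 * ∑ i, v i * R i - ∑ i, v i)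
    (hR2 : ∑ i, (R i)^2 = (n:ℝ) * ((n:ℝ)+1) * (2*(n:ℝ)+1) / 6) :
    (n:ℝ)⁻¹ * ∑ i, (v i - (n:ℝ)⁻¹ * R i)^2
      = (∫ t in (0:ℝ)..1,
          (((n:ℝ)⁻¹ * ∑ i : Fin n, (if v i ≤ t then (1:ℝ) else 0)) - t)^2)
        + 1 / (6 * (n:ℝ)^2) := by
  have hn0 : (0:ℝ) < n := by positivity
  have hnne : (n:ℝ) ≠ 0 := ne_of_gt hn0
  set c : ℝ := (n:ℝ)⁻¹ with hc
  have expand : ∀ t : ℝ,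
      ((c * ∑ i : Fin n, (if v i ≤ t then (1:ℝ) else 0)) - t)^2
        = (∑ i : Fin n, ∑ j : Fin n,
            (c * c) * ((if v i ≤ t then (1:ℝ) else 0) * (if v j ≤ t then (1:ℝ) else 0)))
          - (∑ i : Fin n, (2 * c) * (t * (if v i ≤ t then (1:ℝ) else 0)))
          + t^2 := by
    intro t
    have hS2 : (∑ i : Fin n, (if v i ≤ t then (1:ℝ) else 0))
        * (∑ j : Fin n, (if v j ≤ t then (1:ℝ) else 0))
        = ∑ i : Fin n, ∑ j : Fin n,
            (if v i ≤ t then (1:ℝ) else 0) * (if v j ≤ t then (1:ℝ) else 0) :=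
      Finset.sum_mul_sum _ _ _ _
    calc ((c * ∑ i : Fin n, (if v i ≤ t then (1:ℝ) else 0)) - t)^2
        = (c * c) * ((∑ i : Fin n, (if v i ≤ t then (1:ℝ) else 0))
            * (∑ j : Fin n, (if v j ≤ t then (1:ℝ) else 0)))
          - (2 * c) * (t * ∑ i : Fin n, (if v i ≤ t then (1:ℝ) else 0)) + t^2 := by ring
      _ = _ := by
          rw [hS2]
          simp only [Finset.mul_sum]
  have hprod : ∀ i j : Fin n,
      (fun t => (c * c) * ((if v i ≤ t then (1:ℝ) else 0) * (if v j ≤ t then (1:ℝ) else 0)))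
        = fun t => (c * c) * (if max (v i) (v j) ≤ t then (1:ℝ) else 0) := by
    intro i j
    funext t
    congr 1
    rcases le_or_gt (v i) t with h1 | h1 <;> rcases le_or_gt (v j) t with h2 | h2
    · rw [if_pos h1, if_pos h2, if_pos (max_le h1 h2)]; norm_num
    · rw [if_pos h1, if_neg (not_le.mpr h2),
        if_neg (fun hm => absurd (le_trans (le_max_right _ _) hm) (not_le.mpr h2))]
      norm_num
    · rw [if_neg (not_le.mpr h1), if_pos h2,
        if_neg (fun hm => absurd (le_trans (le_max_left _ _) hm) (not_le.mpr h1))]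
      norm_num
    · rw [if_neg (not_le.mpr h1),
        if_neg (fun hm => absurd (le_trans (le_max_left _ _) hm) (not_le.mpr h1))]
      norm_num
  have hint_pair : ∀ i j : Fin n, IntervalIntegrable
      (fun t => (c * c) * ((if v i ≤ t then (1:ℝ) else 0) * (if v j ≤ t then (1:ℝ) else 0)))
      volume 0 1 := by
    intro i j
    rw [hprod i j]
    exact (ind_integrable _ 0 1).const_mul _
  have hint_t : ∀ i : Fin n, IntervalIntegrable
      (fun t => (2 * c) * (t * (if v i ≤ t then (1:ℝ) else 0))) volume 0 1 :=
    fun i => (ind_t_integrable _ le_rfl zero_le_one).const_mul _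
  have hint_inner : ∀ i : Fin n, IntervalIntegrable
      (fun t => ∑ j : Fin n,
        (c * c) * ((if v i ≤ t then (1:ℝ) else 0) * (if v j ≤ t then (1:ℝ) else 0)))
      volume 0 1 := by
    intro i
    have h := IntervalIntegrable.sum (μ := volume) (a := (0:ℝ)) (b := 1) Finset.univ
      (fun j (_ : j ∈ Finset.univ) => hint_pair i j)
    rwa [Finset.sum_fn] at h
  have hint_A : IntervalIntegrable
      (fun t => ∑ i : Fin n, ∑ j : Fin n,
        (c * c) * ((if v i ≤ t then (1:ℝ) else 0) * (if v j ≤ t then (1:ℝ) else 0)))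
      volume 0 1 := by
    have h := IntervalIntegrable.sum (μ := volume) (a := (0:ℝ)) (b := 1) Finset.univ
      (fun i (_ : i ∈ Finset.univ) => hint_inner i)
    rwa [Finset.sum_fn] at h
  have hint_B : IntervalIntegrable
      (fun t => ∑ i : Fin n, (2 * c) * (t * (if v i ≤ t then (1:ℝ) else 0))) volume 0 1 := by
    have h := IntervalIntegrable.sum (μ := volume) (a := (0:ℝ)) (b := 1) Finset.univ
      (fun i (_ : i ∈ Finset.univ) => hint_t i)
    rwa [Finset.sum_fn] at h
  have hint_C : IntervalIntegrable (fun t : ℝ => t^2) volume 0 1 :=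
    (continuous_pow 2).intervalIntegrable 0 1
  have hI : (∫ t in (0:ℝ)..1,
      (((c * ∑ i : Fin n, (if v i ≤ t then (1:ℝ) else 0)) - t)^2))
      = (∑ i : Fin n, ∑ j : Fin n, (c * c) * (1 - max (v i) (v j)))
        - (∑ i : Fin n, (2 * c) * ((1 - (v i)^2) / 2)) + 1/3 := by
    rw [intervalIntegral.integral_congr (g := fun t =>
      (∑ i : Fin n, ∑ j : Fin n,
        (c * c) * ((if v i ≤ t then (1:ℝ) else 0) * (if v j ≤ t then (1:ℝ) else 0)))
      - (∑ i : Fin n, (2 * c) * (t * (if v i ≤ t then (1:ℝ) else 0))) + t^2)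
      (fun t _ => expand t)]
    rw [intervalIntegral.integral_add (hint_A.sub hint_B) hint_C,
        intervalIntegral.integral_sub hint_A hint_B,
        intervalIntegral.integral_finset_sum (fun i _ => hint_inner i),
        intervalIntegral.integral_finset_sum (fun i _ => hint_t i)]
    have hC : (∫ t in (0:ℝ)..1, t^2) = 1/3 := by
      rw [integral_pow]; norm_num
    rw [hC]
    congr 2
    · apply Finset.sum_congr rfl
      intro i _
      rw [intervalIntegral.integral_finset_sum (fun j _ => hint_pair i j)]
      apply Finset.sum_congr rfl
      intro j _
      rw [hprod i j, intervalIntegral.integral_const_mul,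
        ind_integral (le_max_iff.mpr (Or.inl (hv0 i))) (max_le (hv1 i) (hv1 j))]
    · apply Finset.sum_congr rfl
      intro i _
      rw [intervalIntegral.integral_const_mul, ind_t_integral (hv0 i) (hv1 i)]
  rw [hI]
  have hA : ∑ i : Fin n, ∑ j : Fin n, (c * c) * (1 - max (v i) (v j))
      = (c * c) * ((n:ℝ)^2 - (2 * (∑ i, v i * R i) - (n:ℝ)/2)) := by
    have e : ∑ i : Fin n, ∑ j : Fin n, (c * c) * (1 - max (v i) (v j))
        = (c * c) * ∑ i : Fin n, ∑ j : Fin n, (1 - max (v i) (v j)) := by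
      rw [Finset.mul_sum]
      exact Finset.sum_congr rfl fun i _ => by rw [Finset.mul_sum]
    rw [e]
    congr 1
    have e2 : ∑ i : Fin n, ∑ j : Fin n, (1 - max (v i) (v j))
        = (∑ _i : Fin n, ∑ _j : Fin n, (1:ℝ))
          - ∑ i : Fin n, ∑ j : Fin n, max (v i) (v j) := by
      rw [← Finset.sum_sub_distrib]
      exact Finset.sum_congr rfl fun i _ => by rw [Finset.sum_sub_distrib]
    rw [e2, hmax, hsum]
    simp only [Finset.sum_const, Finset.card_univ, Fintype.card_fin, nsmul_eq_mul, mul_one]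
    push_cast
    ring
  have hB : ∑ i : Fin n, (2 * c) * ((1 - (v i)^2) / 2)
      = (2 * c) * (((n:ℝ) - ∑ i, (v i)^2) / 2) := by
    rw [← Finset.mul_sum]
    congr 1
    calc ∑ i : Fin n, ((1 - (v i)^2) / 2)
        = (∑ i : Fin n, (1 - (v i)^2)) / 2 := by rw [Finset.sum_div]
      _ = ((∑ _i : Fin n, (1:ℝ)) - ∑ i, (v i)^2) / 2 := by rw [Finset.sum_sub_distrib]
      _ = ((n:ℝ) - ∑ i, (v i)^2) / 2 := by
          simp only [Finset.sum_const, Finset.card_univ, Fintype.card_fin,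
            nsmul_eq_mul, mul_one]
  have hL : ∑ i, (v i - c * R i)^2
      = (∑ i, (v i)^2) - (2*c) * (∑ i, v i * R i)
        + (c*c) * ((n:ℝ) * ((n:ℝ)+1) * (2*(n:ℝ)+1) / 6) := by
    have e : ∀ i : Fin n, (v i - c * R i)^2
        = ((v i)^2 - (2*c) * (v i * R i)) + (c*c) * (R i)^2 := fun i => by ring
    rw [Finset.sum_congr rfl (fun i _ => e i), Finset.sum_add_distrib,
      Finset.sum_sub_distrib, ← Finset.mul_sum, ← Finset.mul_sum, hR2]
  rw [hA, hB, hL, hc]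
  field_simp
  ring

end Aux

/-- for distinct points `x_1, …, x_n` (`n ≥ 2`), a nondecreasing
`K : ℝ → [0,1]` with `K(-z) = 1 - K(z)`, and `b ≥ 0`, the leave-one-out values
`V_i = (n-1)⁻¹ ∑_{j ≠ i} K_b(x_i - x_j)` satisfy
`n⁻¹ ∑ i (V_i - F_n(x_i))² = ∫₀¹ (G_n(t) - t)² dt + 1/(6n²)`, where `F_n` is the
empirical d.f. of the `x_i` and `G_n` that of the `V_i`. -/
theorem stmt14 (n : ℕ) (hn : 2 ≤ n) (x : Fin n → ℝ) (hx : Function.Injective x)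
    (K : ℝ → ℝ) (hK01 : ∀ z, K z ∈ Set.Icc (0 : ℝ) 1) (hKmono : Monotone K)
    (hKsym : ∀ z, K (-z) = 1 - K z) (b : ℝ) (hb : 0 ≤ b) :
    (n : ℝ)⁻¹ * ∑ i : Fin n,
        ((((n : ℝ) - 1)⁻¹ * ∑ j ∈ Finset.univ.erase i, scaledKernelDF K b (x i - x j))
          - (n : ℝ)⁻¹ * ∑ l : Fin n, (if x l ≤ x i then (1 : ℝ) else 0)) ^ 2
      = (∫ t in (0 : ℝ)..1,
          (((n : ℝ)⁻¹ * ∑ i : Fin n,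
              (if ((n : ℝ) - 1)⁻¹ *
                  (∑ j ∈ Finset.univ.erase i, scaledKernelDF K b (x i - x j)) ≤ t
                then (1 : ℝ) else 0)) - t) ^ 2)
        + 1 / (6 * (n : ℝ) ^ 2) := by
  classical
  have hKb01 := Kb_mem hK01 b
  have hKbmono := Kb_mono hKmono hb
  have hKbsym := Kb_sym hKsym b
  have hn1 : (0:ℝ) < (n:ℝ) - 1 := by
    have h2 : (2:ℝ) ≤ (n:ℝ) := by exact_mod_cast hn
    linarith
  have hcard : ∀ i : Fin n, (Finset.univ.erase i).card = n - 1 := fun i => by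
    rw [Finset.card_erase_of_mem (Finset.mem_univ i), Finset.card_univ, Fintype.card_fin]
  have hcast : ((n - 1 : ℕ) : ℝ) = (n:ℝ) - 1 := by
    rw [Nat.cast_sub (by omega : 1 ≤ n), Nat.cast_one]
  -- bounds on v
  have hv0 : ∀ i : Fin n, 0 ≤ ((n:ℝ)-1)⁻¹ *
      ∑ j ∈ Finset.univ.erase i, scaledKernelDF K b (x i - x j) := by
    intro i
    exact mul_nonneg (inv_nonneg.mpr hn1.le)
      (Finset.sum_nonneg fun j _ => (hKb01 _).1)
  have hv1 : ∀ i : Fin n, ((n:ℝ)-1)⁻¹ *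
      ∑ j ∈ Finset.univ.erase i, scaledKernelDF K b (x i - x j) ≤ 1 := by
    intro i
    have hS : ∑ j ∈ Finset.univ.erase i, scaledKernelDF K b (x i - x j) ≤ (n:ℝ) - 1 := by
      calc ∑ j ∈ Finset.univ.erase i, scaledKernelDF K b (x i - x j)
          ≤ ∑ _j ∈ Finset.univ.erase i, (1:ℝ) :=
            Finset.sum_le_sum fun j _ => (hKb01 _).2
        _ = (n:ℝ) - 1 := by
            rw [Finset.sum_const, hcard i, nsmul_eq_mul, mul_one, hcast]
    calc ((n:ℝ)-1)⁻¹ * ∑ j ∈ Finset.univ.erase i, scaledKernelDF K b (x i - x j)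
        ≤ ((n:ℝ)-1)⁻¹ * ((n:ℝ) - 1) :=
          mul_le_mul_of_nonneg_left hS (inv_nonneg.mpr hn1.le)
      _ = 1 := inv_mul_cancel₀ (ne_of_gt hn1)
  -- sum of v = n/2
  have hsum : ∑ i : Fin n, (((n:ℝ)-1)⁻¹ *
      ∑ j ∈ Finset.univ.erase i, scaledKernelDF K b (x i - x j)) = (n:ℝ) / 2 := by
    rw [← Finset.mul_sum]
    have e1 : ∀ i : Fin n, ∑ j ∈ Finset.univ.erase i, scaledKernelDF K b (x i - x j)
        = (∑ j : Fin n, scaledKernelDF K b (x i - x j)) - scaledKernelDF K b (x i - x i) :=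
      fun i => Finset.sum_erase_eq_sub (Finset.mem_univ i)
    have e1' : ∀ i : Fin n, ∑ j ∈ Finset.univ.erase i, scaledKernelDF K b (x j - x i)
        = (∑ j : Fin n, scaledKernelDF K b (x j - x i)) - scaledKernelDF K b (x i - x i) :=
      fun i => Finset.sum_erase_eq_sub (Finset.mem_univ i)
    have hswap : ∑ i : Fin n, ∑ j ∈ Finset.univ.erase i, scaledKernelDF K b (x i - x j)
        = ∑ i : Fin n, ∑ j ∈ Finset.univ.erase i, scaledKernelDF K b (x j - x i) := by
      rw [Finset.sum_congr rfl (fun i _ => e1 i), Finset.sum_congr rfl (fun i _ => e1' i),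
        Finset.sum_sub_distrib, Finset.sum_sub_distrib, Finset.sum_comm]
    have h2S : (∑ i : Fin n, ∑ j ∈ Finset.univ.erase i, scaledKernelDF K b (x i - x j)) * 2
        = (n:ℝ) * ((n:ℝ) - 1) := by
      calc (∑ i : Fin n, ∑ j ∈ Finset.univ.erase i, scaledKernelDF K b (x i - x j)) * 2
          = (∑ i : Fin n, ∑ j ∈ Finset.univ.erase i, scaledKernelDF K b (x i - x j))
            + ∑ i : Fin n, ∑ j ∈ Finset.univ.erase i, scaledKernelDF K b (x j - x i) := by
            rw [← hswap]; ring
        _ = ∑ i : Fin n, ∑ j ∈ Finset.univ.erase i,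
              (scaledKernelDF K b (x i - x j) + scaledKernelDF K b (x j - x i)) := by
            rw [← Finset.sum_add_distrib]
            exact Finset.sum_congr rfl fun i _ => by rw [← Finset.sum_add_distrib]
        _ = ∑ i : Fin n, ∑ _j ∈ Finset.univ.erase i, (1:ℝ) := by
            refine Finset.sum_congr rfl fun i _ => Finset.sum_congr rfl fun j _ => ?_
            have h := hKbsym (x i - x j)
            rwa [show -(x i - x j) = x j - x i by ring] at h
        _ = (n:ℝ) * ((n:ℝ) - 1) := by
            rw [Finset.sum_congr rfl (fun i _ => by
              rw [Finset.sum_const, hcard i, nsmul_eq_mul, mul_one])]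
            rw [Finset.sum_const, Finset.card_univ, Fintype.card_fin, nsmul_eq_mul, hcast]
    have hS : ∑ i : Fin n, ∑ j ∈ Finset.univ.erase i, scaledKernelDF K b (x i - x j)
        = (n:ℝ) * ((n:ℝ) - 1) / 2 := by linarith
    rw [hS]
    field_simp
  -- comonotonicity
  have hcomono : ∀ i j : Fin n, x j ≤ x i →
      (((n:ℝ)-1)⁻¹ * ∑ l ∈ Finset.univ.erase j, scaledKernelDF K b (x j - x l))
        ≤ ((n:ℝ)-1)⁻¹ * ∑ l ∈ Finset.univ.erase i, scaledKernelDF K b (x i - x l) := by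
    intro i j hji
    apply mul_le_mul_of_nonneg_left _ (inv_nonneg.mpr hn1.le)
    rcases eq_or_ne j i with rfl | hij
    · exact le_rfl
    · have hjmem : j ∈ Finset.univ.erase i := Finset.mem_erase.mpr ⟨hij, Finset.mem_univ j⟩
      have himem : i ∈ Finset.univ.erase j :=
        Finset.mem_erase.mpr ⟨fun h => hij h.symm, Finset.mem_univ i⟩
      rw [← Finset.add_sum_erase _ _ hjmem, ← Finset.add_sum_erase _ _ himem]
      have hsets : (Finset.univ.erase j).erase i = (Finset.univ.erase i).erase j :=
        Finset.erase_right_comm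
      apply add_le_add
      · exact hKbmono (by linarith)
      · rw [hsets]
        exact Finset.sum_le_sum fun l _ => hKbmono (by linarith)
  -- the max identity
  have hmax : ∑ i : Fin n, ∑ j : Fin n,
      max (((n:ℝ)-1)⁻¹ * ∑ l ∈ Finset.univ.erase i, scaledKernelDF K b (x i - x l))
          (((n:ℝ)-1)⁻¹ * ∑ l ∈ Finset.univ.erase j, scaledKernelDF K b (x j - x l))
      = 2 * (∑ i : Fin n,
          (((n:ℝ)-1)⁻¹ * ∑ l ∈ Finset.univ.erase i, scaledKernelDF K b (x i - x l))
          * (∑ l : Fin n, if x l ≤ x i then (1:ℝ) else 0))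
        - ∑ i : Fin n,
          (((n:ℝ)-1)⁻¹ * ∑ l ∈ Finset.univ.erase i, scaledKernelDF K b (x i - x l)) := by
    set v : Fin n → ℝ := fun i =>
      ((n:ℝ)-1)⁻¹ * ∑ l ∈ Finset.univ.erase i, scaledKernelDF K b (x i - x l) with hvdef
    set r : Fin n → ℝ := fun i => ∑ l : Fin n, if x l ≤ x i then (1:ℝ) else 0 with hrdef
    have hmaxeq : ∀ i j, max (v i) (v j) = if x j ≤ x i then v i else v j := by
      intro i j
      rcases le_or_gt (x j) (x i) with h | h
      · rw [if_pos h, max_eq_left (hcomono i j h)]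
      · rw [if_neg (not_le.mpr h), max_eq_right (hcomono j i h.le)]
    have step1 : ∀ i, ∑ j : Fin n, (if x j ≤ x i then v i else (0:ℝ)) = v i * r i := by
      intro i
      rw [hrdef]
      simp only
      rw [Finset.mul_sum]
      exact Finset.sum_congr rfl fun j _ => by split_ifs <;> ring
    have step2 : ∀ j, ∑ i : Fin n, (if x j ≤ x i then (0:ℝ) else v j) = v j * (r j - 1) := by
      intro j
      have e : ∀ i, (if x j ≤ x i then (0:ℝ) else v j)
          = v j * (if x i < x j then (1:ℝ) else 0) := by
        intro i
        rcases le_or_gt (x j) (x i) with h | h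
        · rw [if_pos h, if_neg (not_lt.mpr h), mul_zero]
        · rw [if_neg (not_le.mpr h), if_pos h, mul_one]
      rw [Finset.sum_congr rfl fun i _ => e i, ← Finset.mul_sum]
      congr 1
      have e2 : ∀ i, (if x i ≤ x j then (1:ℝ) else 0)
          = (if x i < x j then (1:ℝ) else 0) + (if i = j then (1:ℝ) else 0) := by
        intro i
        rcases eq_or_ne i j with rfl | hij
        · rw [if_pos le_rfl, if_neg (lt_irrefl _), if_pos rfl]; ring
        · rw [if_neg hij]
          rcases lt_trichotomy (x i) (x j) with h | h | h
          · rw [if_pos h.le, if_pos h]; ring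
          · exact absurd (hx h) hij
          · rw [if_neg (not_le.mpr h), if_neg (not_lt.mpr h.le)]; ring
      have e3 : r j = (∑ i : Fin n, if x i < x j then (1:ℝ) else 0) + 1 := by
        rw [hrdef]
        simp only
        rw [Finset.sum_congr rfl fun i _ => e2 i, Finset.sum_add_distrib]
        congr 1
        simp
      rw [e3]
      ring
    calc ∑ i : Fin n, ∑ j : Fin n, max (v i) (v j)
        = ∑ i : Fin n, ∑ j : Fin n,
            ((if x j ≤ x i then v i else (0:ℝ)) + (if x j ≤ x i then (0:ℝ) else v j)) := by
          refine Finset.sum_congr rfl fun i _ => Finset.sum_congr rfl fun j _ => ?_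
          rw [hmaxeq i j]; split_ifs <;> ring
      _ = (∑ i : Fin n, ∑ j : Fin n, (if x j ≤ x i then v i else (0:ℝ)))
          + ∑ i : Fin n, ∑ j : Fin n, (if x j ≤ x i then (0:ℝ) else v j) := by
          rw [← Finset.sum_add_distrib]
          exact Finset.sum_congr rfl fun i _ => Finset.sum_add_distrib
      _ = (∑ i : Fin n, v i * r i) + ∑ j : Fin n, v j * (r j - 1) := by
          rw [Finset.sum_congr rfl fun i _ => step1 i, Finset.sum_comm,
            Finset.sum_congr rfl fun j _ => step2 j]
      _ = 2 * (∑ i : Fin n, v i * r i) - ∑ i : Fin n, v i := by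
          rw [Finset.sum_congr rfl (fun j (_ : j ∈ Finset.univ) =>
            (by ring : v j * (r j - 1) = v j * r j - v j)), Finset.sum_sub_distrib]
          ring
  -- rank squares
  have hR2 : ∑ i : Fin n, (∑ l : Fin n, if x l ≤ x i then (1:ℝ) else 0)^2
      = (n:ℝ) * ((n:ℝ)+1) * (2*(n:ℝ)+1) / 6 := by
    set N : Fin n → ℕ := fun i => (Finset.univ.filter (fun l => x l ≤ x i)).card with hN
    have hrN : ∀ i : Fin n, (∑ l : Fin n, if x l ≤ x i then (1:ℝ) else 0) = (N i : ℝ) := by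
      intro i
      rw [hN]
      simp only
      rw [Finset.sum_boole]
    have hNpos : ∀ i, 1 ≤ N i := by
      intro i
      have : i ∈ Finset.univ.filter (fun l => x l ≤ x i) := by
        simp [Finset.mem_filter]
      exact Finset.card_pos.mpr ⟨i, this⟩
    have hNle : ∀ i, N i ≤ n := by
      intro i
      calc N i ≤ Finset.univ.card := Finset.card_filter_le _ _
        _ = n := by rw [Finset.card_univ, Fintype.card_fin]
    have hNmono : ∀ i j, x i < x j → N i < N j := by
      intro i j hij
      apply Finset.card_lt_card
      rw [Finset.ssubset_iff_of_subset]
      · exact ⟨j, by simp [Finset.mem_filter], by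
          simp only [Finset.mem_filter, Finset.mem_univ, true_and]
          exact not_le.mpr hij⟩
      · intro l hl
        simp only [Finset.mem_filter, Finset.mem_univ, true_and] at hl ⊢
        linarith
    have hNinj : Function.Injective N := by
      intro i j hij
      by_contra hne
      rcases lt_trichotomy (x i) (x j) with h | h | h
      · exact absurd hij (ne_of_lt (hNmono i j h))
      · exact hne (hx h)
      · exact absurd hij.symm (ne_of_lt (hNmono j i h))
    have hn0 : 0 < n := by omega
    set e : Fin n → Fin n := fun i => ⟨N i - 1, by have := hNle i; have := hNpos i; omega⟩
      with he
    have heinj : Function.Injective e := by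
      intro i j hij
      apply hNinj
      have h1 := hNpos i
      have h2 := hNpos j
      have : N i - 1 = N j - 1 := congrArg Fin.val hij
      omega
    have hebij : Function.Bijective e := (Finite.injective_iff_bijective).mp heinj
    have hsum_e : ∑ i : Fin n, (((e i : ℕ) : ℝ) + 1)^2 = ∑ k : Fin n, (((k : ℕ) : ℝ) + 1)^2 :=
      Fintype.sum_bijective e hebij _ _ (fun i => rfl)
    have hNval : ∀ i, ((N i : ℕ) : ℝ) = ((e i : ℕ) : ℝ) + 1 := by
      intro i
      have h1 := hNpos i
      rw [he]
      simp only
      have : ((N i - 1 : ℕ) : ℝ) = (N i : ℝ) - 1 := by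
        rw [Nat.cast_sub h1, Nat.cast_one]
      rw [this]
      ring
    calc ∑ i : Fin n, (∑ l : Fin n, if x l ≤ x i then (1:ℝ) else 0)^2
        = ∑ i : Fin n, (((e i : ℕ) : ℝ) + 1)^2 := by
          refine Finset.sum_congr rfl fun i _ => ?_
          rw [hrN i, hNval i]
      _ = ∑ k : Fin n, (((k : ℕ) : ℝ) + 1)^2 := hsum_e
      _ = ∑ k ∈ Finset.range n, ((k:ℝ) + 1)^2 := by
          rw [Fin.sum_univ_eq_sum_range (fun k => ((k:ℝ) + 1)^2) n]
      _ = (n:ℝ) * ((n:ℝ)+1) * (2*(n:ℝ)+1) / 6 := sum_range_sq n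
  exact key n hn
    (fun i => ((n:ℝ)-1)⁻¹ * ∑ j ∈ Finset.univ.erase i, scaledKernelDF K b (x i - x j))
    (fun i => ∑ l : Fin n, if x l ≤ x i then (1:ℝ) else 0)
    hv0 hv1 hsum hmax hR2
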